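/- arXiv:1112.2998 — 3 statements merged into one kernel-verified Lean document; each statement's English description precedes it below -/
import Mathlib

section
/- Let (α_n) be a scale, let λ₁, λ₂ > 0, and set u_n(x₁, x₂) = f_{α_n}(λ₁ x₁, λ₂ x₂), where f_{α_n} is the Moser function. Then ‖u_n − f_{α_n}‖_L → 0 as n → ∞. -/
open MeasureTheory Real Filter Topology

noncomputable section

abbrev Plane : Type := EuclideanSpace ℝ (Fin 2)

/-- Membership in the Sobolev space `H¹(ℝ²)`: `u` and its gradient are in `L²`. -/
def MemH1 (u : Plane → ℝ) : Prop :=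
  MemLp u 2 volume ∧ MemLp (fun x => gradient u x) 2 volume

/-- The squared `H¹` norm: `‖u‖²_{L²} + ‖∇u‖²_{L²}`. -/
def h1NormSq (u : Plane → ℝ) : ℝ :=
  (∫ x, (u x) ^ 2) + ∫ x, ‖gradient u x‖ ^ 2

/-- The Trudinger–Moser constant `κ`. -/
def TMconst : ℝ :=
  sSup {c : ℝ | ∃ u : Plane → ℝ, MemH1 u ∧ h1NormSq u ≤ 1 ∧
    c = ∫ x, (Real.exp (4 * Real.pi * (u x) ^ 2) - 1)}

/-- The Orlicz norm of `u` restricted to a set `s`. -/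
def orliczNormOn (s : Set Plane) (u : Plane → ℝ) : ℝ :=
  sInf {l : ℝ | 0 < l ∧ (∫ x in s, (Real.exp ((u x) ^ 2 / l ^ 2) - 1)) ≤ TMconst}

/-- The Orlicz norm of `u` on all of `ℝ²`. -/
def orliczNorm (u : Plane → ℝ) : ℝ := orliczNormOn Set.univ u

/-- A scale: positive reals tending to infinity. -/
def IsScale (a : ℕ → ℝ) : Prop :=
  (∀ n, 0 < a n) ∧ Filter.Tendsto a Filter.atTop Filter.atTop

/-- A profile: `ψ ∈ L²(ℝ, e^{-2s}ds)`, `ψ' ∈ L²(ℝ)`, `ψ = 0` on `(-∞,0]`. -/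
def IsProfile (ψ : ℝ → ℝ) : Prop :=
  (∀ s ≤ 0, ψ s = 0) ∧
  MemLp (deriv ψ) 2 volume ∧
  MemLp ψ 2 (volume.withDensity fun s => ENNReal.ofReal (Real.exp (-2 * s))) ∧
  ∀ s, ψ s = ∫ t in Set.Ioc (0 : ℝ) s, deriv ψ t

/-- Orthogonality of scales: `|log (β_n / α_n)| → ∞`. -/
def ScaleOrtho (a b : ℕ → ℝ) : Prop :=
  Filter.Tendsto (fun n => |Real.log (b n / a n)|) Filter.atTop Filter.atTop

/-- Orthogonality of triplets (scale, core, profile). -/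
def TripletOrtho (a : ℕ → ℝ) (x : ℕ → Plane) (ψ : ℝ → ℝ)
    (b : ℕ → ℝ) (y : ℕ → Plane) (φ : ℝ → ℝ) : Prop :=
  ScaleOrtho a b ∨
  ((∀ n, b n = a n) ∧ ∃ c : ℝ, 0 ≤ c ∧
    Filter.Tendsto (fun n => -Real.log (dist (x n) (y n)) / a n) Filter.atTop (nhds c) ∧
    ((∀ s < c, ψ s = 0) ∨ (∀ s < c, φ s = 0)))

/-- The Moser function `f_α`. -/
def moser (α : ℝ) (x : Plane) : ℝ :=
  if 1 ≤ ‖x‖ then 0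
  else if ‖x‖ ≤ Real.exp (-α) then Real.sqrt (α / (2 * Real.pi))
  else -Real.log ‖x‖ / Real.sqrt (2 * Real.pi * α)

/-- The Moser profile `L(s) = max 0 (min s 1)`. -/
def Lprof (s : ℝ) : ℝ := max 0 (min s 1)

/-- Membership in `H¹₀(Ω)`: limit in `H¹`-norm of smooth functions compactly supported in `Ω`. -/
def MemH10 (Ω : Set Plane) (v : Plane → ℝ) : Prop :=
  ∃ φ : ℕ → Plane → ℝ,
    (∀ n, ContDiff ℝ (⊤ : ℕ∞) (φ n) ∧ HasCompactSupport (φ n) ∧ tsupport (φ n) ⊆ Ω) ∧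
    Filter.Tendsto (fun n => (∫ x, (v x - φ n x) ^ 2) +
      ∫ x, ‖gradient v x - gradient (φ n) x‖ ^ 2) Filter.atTop (nhds 0)

lemma my_moser_eq (α : ℝ) (hα : 0 < α) (x : Plane) (hx : x ≠ 0) :
    moser α x = min (max (-Real.log ‖x‖) 0) α / Real.sqrt (2 * Real.pi * α) := by
  have hx0 : (0:ℝ) < ‖x‖ := norm_pos_iff.mpr hx
  have h2pi : (0:ℝ) < 2 * Real.pi := by positivity
  unfold moser
  by_cases hb1 : 1 ≤ ‖x‖
  · rw [if_pos hb1]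
    have hlog : -Real.log ‖x‖ ≤ 0 := by
      have := Real.log_nonneg hb1; linarith
    rw [max_eq_right hlog, min_eq_left hα.le, zero_div]
  · rw [if_neg hb1]
    push_neg at hb1
    by_cases h2 : ‖x‖ ≤ Real.exp (-α)
    · rw [if_pos h2]
      have hlog : α ≤ -Real.log ‖x‖ := by
        have := Real.log_le_log hx0 h2
        rw [Real.log_exp] at this; linarith
      rw [max_eq_left (le_trans hα.le hlog), min_eq_right hlog]
      rw [eq_div_iff (by positivity : Real.sqrt (2 * Real.pi * α) ≠ 0)]
      rw [← Real.sqrt_mul (by positivity) (2 * Real.pi * α)]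
      rw [show α / (2 * Real.pi) * (2 * Real.pi * α) = α ^ 2 by field_simp]
      exact Real.sqrt_sq hα.le
    · rw [if_neg h2]
      push_neg at h2
      have hl1 : 0 ≤ -Real.log ‖x‖ := by
        have := Real.log_nonpos hx0.le hb1.le; linarith
      have hl2 : -Real.log ‖x‖ ≤ α := by
        have : -α < Real.log ‖x‖ := (Real.lt_log_iff_exp_lt hx0).mpr h2
        linarith
      rw [max_eq_left hl1, min_eq_left hl2]

lemma my_moser_nonneg (α : ℝ) (hα : 0 < α) (x : Plane) : 0 ≤ moser α x := by
  unfold moser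
  split_ifs with hb1 h2
  · exact le_refl 0
  · positivity
  · push_neg at hb1 h2
    have hx0 : (0:ℝ) < ‖x‖ := lt_trans (Real.exp_pos _) h2
    have : Real.log ‖x‖ ≤ 0 := Real.log_nonpos hx0.le hb1.le
    have : 0 ≤ -Real.log ‖x‖ := by linarith
    positivity

lemma my_moser_le (α : ℝ) (hα : 0 < α) (x : Plane) :
    moser α x ≤ Real.sqrt (α / (2 * Real.pi)) := by
  unfold moser
  split_ifs with hb1 h2
  · positivity
  · exact le_rfl
  · push_neg at hb1 h2
    have hx0 : (0:ℝ) < ‖x‖ := lt_trans (Real.exp_pos _) h2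
    have hl2 : -Real.log ‖x‖ ≤ α := by
      have : -α < Real.log ‖x‖ := (Real.lt_log_iff_exp_lt hx0).mpr h2
      linarith
    have hs : Real.sqrt (α / (2 * Real.pi)) = α / Real.sqrt (2 * Real.pi * α) := by
      rw [eq_div_iff (by positivity : Real.sqrt (2 * Real.pi * α) ≠ 0)]
      rw [← Real.sqrt_mul (by positivity) (2 * Real.pi * α)]
      rw [show α / (2 * Real.pi) * (2 * Real.pi * α) = α ^ 2 by field_simp]
      exact Real.sqrt_sq hα.le
    rw [hs]
    gcongr

lemma my_norm_scale (l1 l2 : ℝ) (h1 : 0 < l1) (h2 : 0 < l2) (x : Plane) :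
    min l1 l2 * ‖x‖ ≤ ‖((WithLp.equiv 2 (Fin 2 → ℝ)).symm ![l1 * (WithLp.equiv 2 (Fin 2 → ℝ)) x 0,
      l2 * (WithLp.equiv 2 (Fin 2 → ℝ)) x 1] : Plane)‖ ∧
    ‖((WithLp.equiv 2 (Fin 2 → ℝ)).symm ![l1 * (WithLp.equiv 2 (Fin 2 → ℝ)) x 0,
      l2 * (WithLp.equiv 2 (Fin 2 → ℝ)) x 1] : Plane)‖ ≤ max l1 l2 * ‖x‖ := by
  have e1 : ‖((WithLp.equiv 2 (Fin 2 → ℝ)).symm ![l1 * (WithLp.equiv 2 (Fin 2 → ℝ)) x 0,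
      l2 * (WithLp.equiv 2 (Fin 2 → ℝ)) x 1] : Plane)‖
      = Real.sqrt ((l1 * x 0) ^ 2 + (l2 * x 1) ^ 2) := by
    rw [EuclideanSpace.norm_eq]; simp [Fin.sum_univ_two, sq_abs]
  have e2 : ‖x‖ = Real.sqrt ((x 0) ^ 2 + (x 1) ^ 2) := by
    rw [EuclideanSpace.norm_eq]; simp [Fin.sum_univ_two, sq_abs]
  have hm : (0:ℝ) < min l1 l2 := lt_min h1 h2
  have hM : (0:ℝ) < max l1 l2 := lt_of_lt_of_le h1 (le_max_left _ _)
  constructor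
  · rw [e1, e2, ← Real.sqrt_sq hm.le, ← Real.sqrt_mul (sq_nonneg _)]
    apply Real.sqrt_le_sqrt
    have a1 : min l1 l2 ^ 2 * (x 0) ^ 2 ≤ (l1 * x 0) ^ 2 := by
      rw [mul_pow]; gcongr
      · exact min_le_left _ _
    have a2 : min l1 l2 ^ 2 * (x 1) ^ 2 ≤ (l2 * x 1) ^ 2 := by
      rw [mul_pow]; gcongr
      · exact min_le_right _ _
    nlinarith [sq_nonneg (x 0), sq_nonneg (x 1)]
  · rw [e1, e2, ← Real.sqrt_sq hM.le, ← Real.sqrt_mul (sq_nonneg _)]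
    apply Real.sqrt_le_sqrt
    have a1 : (l1 * x 0) ^ 2 ≤ max l1 l2 ^ 2 * (x 0) ^ 2 := by
      rw [mul_pow]; gcongr
      · exact le_max_left _ _
    have a2 : (l2 * x 1) ^ 2 ≤ max l1 l2 ^ 2 * (x 1) ^ 2 := by
      rw [mul_pow]; gcongr
      · exact le_max_right _ _
    nlinarith

lemma my_cont_scale (l1 l2 : ℝ) :
    Continuous (fun x : Plane => ((WithLp.equiv 2 (Fin 2 → ℝ)).symm
      ![l1 * (WithLp.equiv 2 (Fin 2 → ℝ)) x 0, l2 * (WithLp.equiv 2 (Fin 2 → ℝ)) x 1] : Plane)) := by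
  apply Continuous.comp (PiLp.continuous_toLp 2 (fun _ : Fin 2 => ℝ))
  apply continuous_pi
  intro i
  fin_cases i <;> simp <;>
    exact (continuous_const.mul (((continuous_apply _).comp (PiLp.continuous_ofLp 2 (fun _ : Fin 2 => ℝ)))))

lemma my_meas_moser (α : ℝ) : Measurable (moser α) := by
  unfold moser
  apply Measurable.ite (measurableSet_le measurable_const measurable_norm) measurable_const
  apply Measurable.ite (measurableSet_le measurable_norm measurable_const) measurable_const
  exact ((measurable_norm.log).neg).div measurable_const

lemma my_integrable_bound (v : Plane → ℝ) (hv : Measurable v) (K R l : ℝ) (hl : 0 < l)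
    (hb : ∀ x, |v x| ≤ K) (hs : ∀ x, R ≤ ‖x‖ → v x = 0) :
    Integrable (fun x => Real.exp (v x ^ 2 / l ^ 2) - 1) ∧
    ∫ x, (Real.exp (v x ^ 2 / l ^ 2) - 1) ≤
      (Real.exp (K ^ 2 / l ^ 2) - 1) * (volume (Metric.closedBall (0 : Plane) R)).toReal := by
  set B : ℝ := Real.exp (K ^ 2 / l ^ 2) - 1 with hB
  set f : Plane → ℝ := fun x => Real.exp (v x ^ 2 / l ^ 2) - 1 with hf
  set g : Plane → ℝ := (Metric.closedBall (0 : Plane) R).indicator (fun _ => B) with hg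
  have hf0 : ∀ x, 0 ≤ f x := by
    intro x
    have : (1:ℝ) ≤ Real.exp (v x ^ 2 / l ^ 2) := Real.one_le_exp (by positivity)
    simp only [hf]; linarith
  have hfg : ∀ x, f x ≤ g x := by
    intro x
    by_cases hx : x ∈ Metric.closedBall (0 : Plane) R
    · rw [hg, Set.indicator_of_mem hx]
      have hK : 0 ≤ K := (abs_nonneg _).trans (hb x)
      have h1 : v x ^ 2 ≤ K ^ 2 := by
        rw [← sq_abs (v x)]
        exact pow_le_pow_left₀ (abs_nonneg _) (hb x) 2
      have h2 : v x ^ 2 / l ^ 2 ≤ K ^ 2 / l ^ 2 := by gcongr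
      have := Real.exp_le_exp.mpr h2
      simp only [hf, hB]
      linarith
    · rw [hg, Set.indicator_of_notMem hx]
      have hnx : R ≤ ‖x‖ := by
        rw [Metric.mem_closedBall, dist_zero_right] at hx
        exact (not_le.mp hx).le
      simp only [hf, hs x hnx]
      norm_num
  have hfmeas : Measurable f := by
    apply Measurable.sub _ measurable_const
    exact Real.measurable_exp.comp ((hv.pow_const 2).div_const (l ^ 2))
  have hgint : Integrable g := by
    rw [hg]
    apply MeasureTheory.IntegrableOn.integrable_indicator _ measurableSet_closedBall
    exact integrableOn_const measure_closedBall_lt_top.ne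
  have hfint : Integrable f := by
    apply Integrable.mono' hgint hfmeas.aestronglyMeasurable
    filter_upwards with x
    rw [Real.norm_eq_abs, abs_of_nonneg (hf0 x)]
    exact hfg x
  refine ⟨hfint, ?_⟩
  calc ∫ x, f x ≤ ∫ x, g x := integral_mono hfint hgint hfg
    _ = B * (volume (Metric.closedBall (0 : Plane) R)).toReal := by
        rw [hg, integral_indicator_const _ measurableSet_closedBall, smul_eq_mul, mul_comm]; rfl

lemma my_TMconst_nonneg : 0 ≤ TMconst := by
  have h0mem : (0:ℝ) ∈ {c : ℝ | ∃ u : Plane → ℝ, MemH1 u ∧ h1NormSq u ≤ 1 ∧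
      c = ∫ x, (Real.exp (4 * Real.pi * (u x) ^ 2) - 1)} := by
    refine ⟨fun _ => 0, ⟨?_, ?_⟩, ?_, ?_⟩
    · exact (MemLp.zero : MemLp (0 : Plane → ℝ) 2 volume)
    · have : (fun x : Plane => gradient (fun _ : Plane => (0:ℝ)) x) = fun _ : Plane => (0:Plane) :=
        funext fun x => gradient_const x 0
      rw [this]; exact (MemLp.zero : MemLp (0 : Plane → Plane) 2 volume)
    · simp [h1NormSq, gradient_const]
    · simp
  by_cases hbdd : BddAbove {c : ℝ | ∃ u : Plane → ℝ, MemH1 u ∧ h1NormSq u ≤ 1 ∧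
      c = ∫ x, (Real.exp (4 * Real.pi * (u x) ^ 2) - 1)}
  · exact le_csSup hbdd h0mem
  · rw [TMconst, Real.sSup_of_not_bddAbove hbdd]

lemma my_orlicz_nonneg (u : Plane → ℝ) : 0 ≤ orliczNorm u :=
  Real.sInf_nonneg fun _ hl => hl.1.le

lemma my_orlicz_le (u : Plane → ℝ) (l : ℝ) (hl : 0 < l)
    (h : (∫ x, (Real.exp ((u x) ^ 2 / l ^ 2) - 1)) ≤ TMconst) : orliczNorm u ≤ l := by
  apply csInf_le ⟨0, fun m hm => hm.1.le⟩
  refine ⟨hl, ?_⟩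
  rwa [MeasureTheory.setIntegral_univ]

lemma my_clamp_lip (α A B : ℝ) : |min (max A 0) α - min (max B 0) α| ≤ |A - B| := by
  have h1 := abs_min_sub_min_le_max (max A 0) α (max B 0) α
  have h2 := abs_max_sub_max_le_abs A B 0
  simp only [sub_self, abs_zero] at h1
  exact h1.trans (max_le h2 (abs_nonneg _))

lemma my_moser_diff (α : ℝ) (hα : 0 < α) (x y : Plane) (hx : x ≠ 0) (hy : y ≠ 0) :
    |moser α y - moser α x| ≤ |Real.log ‖y‖ - Real.log ‖x‖| / Real.sqrt (2 * Real.pi * α) := by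
  rw [my_moser_eq α hα x hx, my_moser_eq α hα y hy, div_sub_div_same, abs_div,
    abs_of_nonneg (Real.sqrt_nonneg _)]
  have hden : (0:ℝ) < Real.sqrt (2 * Real.pi * α) := by positivity
  rw [div_le_div_iff_of_pos_right hden]
  have h := my_clamp_lip α (-Real.log ‖y‖) (-Real.log ‖x‖)
  have he : |(-Real.log ‖y‖) - (-Real.log ‖x‖)| = |Real.log ‖y‖ - Real.log ‖x‖| := by
    rw [← abs_neg]; ring_nf
  rw [he] at h
  exact h

lemma my_moser_zero (α : ℝ) (x : Plane) (hx : 1 ≤ ‖x‖) : moser α x = 0 := by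
  unfold moser; rw [if_pos hx]

/-- **Anisotropic transform of the Moser example:** with `u_n(x) = f_{α_n}(λ₁x₁, λ₂x₂)`,
one has `‖u_n − f_{α_n}‖_L → 0`. -/
theorem statement8 (a : ℕ → ℝ) (ha : IsScale a) (l1 l2 : ℝ) (h1 : 0 < l1) (h2 : 0 < l2) :
    Filter.Tendsto (fun n => orliczNorm (fun x : Plane =>
        moser (a n) ((WithLp.equiv 2 (Fin 2 → ℝ)).symm
          ![l1 * (WithLp.equiv 2 (Fin 2 → ℝ)) x 0, l2 * (WithLp.equiv 2 (Fin 2 → ℝ)) x 1])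
          - moser (a n) x))
      Filter.atTop (nhds 0) := by
  have ha : (∀ n, 0 < a n) ∧ Filter.Tendsto a Filter.atTop Filter.atTop := ha
  set T : Plane → Plane := fun x => (WithLp.equiv 2 (Fin 2 → ℝ)).symm
      ![l1 * (WithLp.equiv 2 (Fin 2 → ℝ)) x 0, l2 * (WithLp.equiv 2 (Fin 2 → ℝ)) x 1] with hT
  set v : ℕ → Plane → ℝ := fun n x => moser (a n) (T x) - moser (a n) x with hv
  show Filter.Tendsto (fun n => orliczNorm (v n)) Filter.atTop (nhds 0)
  set m : ℝ := min l1 l2 with hm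
  set M : ℝ := max l1 l2 with hM
  have hm0 : 0 < m := lt_min h1 h2
  have hM0 : 0 < M := lt_of_lt_of_le h1 (le_max_left _ _)
  set C : ℝ := max |Real.log m| |Real.log M| with hC
  have hC0 : 0 ≤ C := le_trans (abs_nonneg _) (le_max_left _ _)
  set R : ℝ := max 1 m⁻¹ with hR
  -- scaling bounds
  have hTnorm : ∀ x : Plane, m * ‖x‖ ≤ ‖T x‖ ∧ ‖T x‖ ≤ M * ‖x‖ := fun x =>
    my_norm_scale l1 l2 h1 h2 x
  have hT0 : T 0 = 0 := by
    have := (hTnorm 0).2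
    rw [norm_zero, mul_zero] at this
    exact norm_le_zero_iff.mp this
  -- support
  have hsupp : ∀ n x, R ≤ ‖x‖ → v n x = 0 := by
    intro n x hx
    have hx1 : 1 ≤ ‖x‖ := le_trans (le_max_left _ _) hx
    have hxT : 1 ≤ ‖T x‖ := by
      have h3 : m⁻¹ ≤ ‖x‖ := le_trans (le_max_right _ _) hx
      have : m * m⁻¹ ≤ m * ‖x‖ := by gcongr
      rw [mul_inv_cancel₀ hm0.ne'] at this
      exact le_trans this (hTnorm x).1
    simp only [hv, my_moser_zero _ _ hx1, my_moser_zero _ _ hxT, sub_zero]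
  -- uniform bound
  have hbound : ∀ n x, |v n x| ≤ C / Real.sqrt (2 * Real.pi * a n) := by
    intro n x
    by_cases hx : x = 0
    · subst hx
      simp only [hv, hT0, sub_self, abs_zero]
      positivity
    · have hx0 : (0:ℝ) < ‖x‖ := norm_pos_iff.mpr hx
      have hTx0 : (0:ℝ) < ‖T x‖ := lt_of_lt_of_le (by positivity) (hTnorm x).1
      have hTx : T x ≠ 0 := norm_pos_iff.mp hTx0
      refine le_trans (my_moser_diff (a n) (ha.1 n) x (T x) hx hTx) ?_
      have hden : (0:ℝ) < Real.sqrt (2 * Real.pi * a n) := by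
        have := ha.1 n; positivity
      rw [div_le_div_iff_of_pos_right hden]
      rw [← Real.log_div hTx0.ne' hx0.ne']
      have hub : ‖T x‖ / ‖x‖ ≤ M := (div_le_iff₀ hx0).mpr (hTnorm x).2
      have hlb : m ≤ ‖T x‖ / ‖x‖ := (le_div_iff₀ hx0).mpr (hTnorm x).1
      have hrpos : 0 < ‖T x‖ / ‖x‖ := by positivity
      apply abs_le.mpr
      constructor
      · have : Real.log m ≤ Real.log (‖T x‖ / ‖x‖) := Real.log_le_log hm0 hlb
        have h4 : -C ≤ Real.log m := by
          have : -|Real.log m| ≤ Real.log m := neg_abs_le _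
          have h5 : |Real.log m| ≤ C := le_max_left _ _
          linarith
        linarith
      · have : Real.log (‖T x‖ / ‖x‖) ≤ Real.log M := Real.log_le_log hrpos hub
        have h4 : Real.log M ≤ C := le_trans (le_abs_self _) (le_max_right _ _)
        linarith
  -- measurability
  have hmeas : ∀ n, Measurable (v n) := by
    intro n
    exact ((my_meas_moser (a n)).comp (my_cont_scale l1 l2).measurable).sub (my_meas_moser (a n))
  have hTM := my_TMconst_nonneg
  rcases hTM.lt_or_eq with hpos | hzero
  · -- TMconst > 0
    set V : ℝ := (volume (Metric.closedBall (0 : Plane) R)).toReal with hV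
    apply tendsto_order.2
    constructor
    · intro b hb
      filter_upwards with n
      exact lt_of_lt_of_le hb (my_orlicz_nonneg (v n))
    · intro ε hε
      set l : ℝ := ε / 2 with hl
      have hl0 : 0 < l := by positivity
      -- b n → 0
      have hKt : Filter.Tendsto (fun n => C / Real.sqrt (2 * Real.pi * a n))
          Filter.atTop (nhds 0) := by
        apply Filter.Tendsto.div_atTop tendsto_const_nhds
        apply Filter.tendsto_atTop_atTop.mpr
        intro b
        obtain ⟨N, hN⟩ := Filter.eventually_atTop.mp
          (ha.2.eventually_ge_atTop ((max 0 b) ^ 2 / (2 * Real.pi)))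
        refine ⟨N, fun n hn => ?_⟩
        have h0 : 0 ≤ max 0 b := le_max_left _ _
        have h3 : (max 0 b) ^ 2 ≤ 2 * Real.pi * a n := by
          have := hN n hn
          rw [div_le_iff₀ (by positivity : (0:ℝ) < 2 * Real.pi)] at this
          linarith
        calc b ≤ max 0 b := le_max_right _ _
          _ = Real.sqrt ((max 0 b) ^ 2) := (Real.sqrt_sq h0).symm
          _ ≤ Real.sqrt (2 * Real.pi * a n) := Real.sqrt_le_sqrt h3
      have hbt : Filter.Tendsto (fun n =>
          (Real.exp ((C / Real.sqrt (2 * Real.pi * a n)) ^ 2 / l ^ 2) - 1) * V)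
          Filter.atTop (nhds 0) := by
        have e1 : Filter.Tendsto (fun n => (C / Real.sqrt (2 * Real.pi * a n)) ^ 2 / l ^ 2)
            Filter.atTop (nhds 0) := by
          have := (hKt.pow 2).div_const (l ^ 2)
          simpa using this
        have e2 := (Real.continuous_exp.tendsto 0).comp e1
        rw [Real.exp_zero] at e2
        have e3 := (e2.sub_const 1).mul_const V
        simpa using e3
      have hev : ∀ᶠ n in Filter.atTop,
          (Real.exp ((C / Real.sqrt (2 * Real.pi * a n)) ^ 2 / l ^ 2) - 1) * V ≤ TMconst :=
        hbt.eventually (eventually_le_nhds hpos)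
      filter_upwards [hev] with n hn
      have hib := my_integrable_bound (v n) (hmeas n) (C / Real.sqrt (2 * Real.pi * a n)) R l
        hl0 (hbound n) (hsupp n)
      have : orliczNorm (v n) ≤ l := my_orlicz_le (v n) l hl0 (le_trans hib.2 hn)
      calc orliczNorm (v n) ≤ l := this
        _ < ε := by rw [hl]; linarith
  · -- TMconst = 0
    have : ∀ n, orliczNorm (v n) = 0 := by
      intro n
      unfold orliczNorm orliczNormOn
      by_cases hz : (fun x => v n x) =ᵐ[volume] (fun _ => (0:ℝ))
      · have hset : {l : ℝ | 0 < l ∧ (∫ x in Set.univ, (Real.exp ((v n x) ^ 2 / l ^ 2) - 1)) ≤ TMconst}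
            = Set.Ioi 0 := by
          ext l
          simp only [Set.mem_setOf_eq, Set.mem_Ioi]
          constructor
          · exact fun h => h.1
          · intro hl
            refine ⟨hl, ?_⟩
            rw [MeasureTheory.setIntegral_univ]
            have : (∫ x, (Real.exp ((v n x) ^ 2 / l ^ 2) - 1)) = ∫ (_ : Plane), (0:ℝ) := by
              apply integral_congr_ae
              filter_upwards [hz] with x hx
              simp [hx]
            rw [this, integral_zero]
            exact my_TMconst_nonneg
        rw [hset]
        exact csInf_Ioi
      · have hset : {l : ℝ | 0 < l ∧ (∫ x in Set.univ, (Real.exp ((v n x) ^ 2 / l ^ 2) - 1)) ≤ TMconst}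
            = ∅ := by
          apply Set.eq_empty_iff_forall_notMem.mpr
          rintro l ⟨hl, hint⟩
          rw [MeasureTheory.setIntegral_univ, ← hzero] at hint
          -- crude bound on v n
          have hvb : ∀ x, |v n x| ≤ Real.sqrt (a n / (2 * Real.pi)) := by
            intro x
            have b1 := my_moser_nonneg (a n) (ha.1 n) (T x)
            have b2 := my_moser_nonneg (a n) (ha.1 n) x
            have b3 := my_moser_le (a n) (ha.1 n) (T x)
            have b4 := my_moser_le (a n) (ha.1 n) x
            rw [abs_le]
            constructor <;> simp only [hv] <;> linarith
          have hib := my_integrable_bound (v n) (hmeas n) (Real.sqrt (a n / (2 * Real.pi))) R l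
            hl hvb (hsupp n)
          have hnn : (0 : Plane → ℝ) ≤ᵐ[volume] fun x => Real.exp ((v n x) ^ 2 / l ^ 2) - 1 := by
            filter_upwards with x
            have : (1:ℝ) ≤ Real.exp ((v n x) ^ 2 / l ^ 2) := Real.one_le_exp (by positivity)
            simp only [Pi.zero_apply]; linarith
          have hz2 : (∫ x, (Real.exp ((v n x) ^ 2 / l ^ 2) - 1)) = 0 :=
            le_antisymm hint (integral_nonneg_of_ae hnn)
          have := (integral_eq_zero_iff_of_nonneg_ae hnn hib.1).mp hz2
          apply hz
          filter_upwards [this] with x hx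
          simp only [Pi.zero_apply] at hx
          have hexp : Real.exp ((v n x) ^ 2 / l ^ 2) = 1 := by linarith
          have : (v n x) ^ 2 / l ^ 2 = 0 :=
            Real.exp_injective (by rw [hexp, Real.exp_zero] :
              Real.exp ((v n x) ^ 2 / l ^ 2) = Real.exp 0)
          have hvx : (v n x) ^ 2 = 0 := by
            rcases div_eq_zero_iff.mp this with h | h
            · exact h
            · exact absurd (sq_eq_zero_iff.mp h) hl.ne'
          exact sq_eq_zero_iff.mp hvx
        rw [hset, Real.sInf_empty]
    rw [show (fun n => orliczNorm (v n)) = fun _ => (0:ℝ) from funext this]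
    exact tendsto_const_nhds
end
end

section
/- Let (α_n) and (β_n) be scales with β_n / α_n → ∞, and let 0 < p < 2 and 0 < q < 2. Set K_n = e^{p α_n} ∫_{e^{−β_n}}^{e^{−α_n}} e^{q (log r)² / β_n} r dr. Then K_n → 0 as n → ∞. -/
open MeasureTheory Real Filter Topology

noncomputable section

/-- Key exponent inequality: for `-B ≤ L ≤ -A`, the chord bound on the convex
quadratic gives `q L²/B + L ≤ -qA + (1 - q(1 + A/B)) L`. -/
lemma aux_exponent_bound (q A B L : ℝ) (hq : 0 < q) (hB : 0 < B)
    (hL1 : -B ≤ L) (hL2 : L ≤ -A) :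
    q * L ^ 2 / B + L ≤ -(q * A) + (1 - q * (1 + A / B)) * L := by
  have key : (L + A) * (L + B) ≤ 0 :=
    mul_nonpos_of_nonpos_of_nonneg (by linarith) (by linarith)
  have h1 : L ^ 2 ≤ -(A * B) - (A + B) * L := by nlinarith
  have h2 : q * L ^ 2 / B ≤ q * (-(A * B) - (A + B) * L) / B := by
    gcongr
  have h3 : q * (-(A * B) - (A + B) * L) / B
      = -(q * A) + (1 - q * (1 + A / B)) * L - L := by
    field_simp
    ring
  linarith

/-- For orthogonal scales `α_n ≪ β_n` and `0 < p, q < 2`,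
`K_n = e^{pα_n} ∫_{e^{−β_n}}^{e^{−α_n}} e^{q(log r)²/β_n} r dr → 0`. -/
theorem statement12 (a b : ℕ → ℝ) (ha : IsScale a) (hb : IsScale b)
    (hab : Filter.Tendsto (fun n => b n / a n) Filter.atTop Filter.atTop)
    (p q : ℝ) (hp0 : 0 < p) (hp2 : p < 2) (hq0 : 0 < q) (hq2 : q < 2) :
    Filter.Tendsto (fun n => Real.exp (p * a n) *
        ∫ r in Real.exp (-b n)..Real.exp (-a n),
          Real.exp (q * (Real.log r) ^ 2 / b n) * r)
      Filter.atTop (nhds 0) := by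
  -- a n / b n → 0
  have hba : Tendsto (fun n => a n / b n) atTop (nhds 0) := by
    have h := hab.inv_tendsto_atTop
    refine h.congr fun n => ?_
    simp [inv_div]
  have hm : (0 : ℝ) < min ((2 - p) / 2) ((2 - q) / 2) := by
    simp only [lt_min_iff]
    constructor <;> linarith
  have hev : ∀ᶠ n in atTop, a n ≤ b n ∧
      q * (a n / b n) ≤ min ((2 - p) / 2) ((2 - q) / 2) := by
    have h1 : ∀ᶠ n in atTop, 1 ≤ b n / a n := hab.eventually_ge_atTop 1
    have h2 : Tendsto (fun n => q * (a n / b n)) atTop (nhds 0) := by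
      simpa using hba.const_mul q
    have h3 : ∀ᶠ n in atTop, q * (a n / b n) < min ((2 - p) / 2) ((2 - q) / 2) :=
      h2.eventually_lt_const hm
    filter_upwards [h1, h3] with n hn1 hn3
    refine ⟨?_, hn3.le⟩
    have := (one_le_div (ha.1 n)).mp hn1
    linarith
  -- squeeze
  apply squeeze_zero'
  · -- nonnegativity
    filter_upwards [hev] with n hn
    have hle : Real.exp (-b n) ≤ Real.exp (-a n) := by
      apply Real.exp_le_exp.mpr; linarith [hn.1]
    refine mul_nonneg (Real.exp_pos _).le ?_
    apply intervalIntegral.integral_nonneg hle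
    intro r hr
    have hr0 : 0 < r := lt_of_lt_of_le (Real.exp_pos _) hr.1
    positivity
  · -- upper bound
    filter_upwards [hev] with n hn
    obtain ⟨hab', hsmall⟩ := hn
    set A := a n with hAdef
    set B := b n with hBdef
    have hA : 0 < A := ha.1 n
    have hB : 0 < B := hb.1 n
    set q' : ℝ := q * (1 + A / B) with hq'def
    have hq'1 : q' = q + q * (A / B) := by rw [hq'def]; ring
    have hsp : q * (A / B) ≤ (2 - p) / 2 := le_trans hsmall (min_le_left _ _)
    have hsq : q * (A / B) ≤ (2 - q) / 2 := le_trans hsmall (min_le_right _ _)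
    have hq'2 : q' < 2 := by rw [hq'1]; linarith
    have h2q' : (2 - q) / 2 ≤ 2 - q' := by rw [hq'1]; linarith
    have h2q'pos : 0 < 2 - q' := by linarith
    have hle : Real.exp (-B) ≤ Real.exp (-A) := Real.exp_le_exp.mpr (by linarith)
    -- continuity / integrability
    have hpos : ∀ r ∈ Set.uIcc (Real.exp (-B)) (Real.exp (-A)), 0 < r := by
      intro r hr
      rw [Set.uIcc_of_le hle] at hr
      exact lt_of_lt_of_le (Real.exp_pos _) hr.1
    have hcf : ContinuousOn (fun r => Real.exp (q * (Real.log r) ^ 2 / B) * r)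
        (Set.uIcc (Real.exp (-B)) (Real.exp (-A))) := by
      apply ContinuousOn.mul ?_ continuousOn_id
      apply Real.continuous_exp.comp_continuousOn
      apply ContinuousOn.div_const
      apply ContinuousOn.mul continuousOn_const
      exact ((Real.continuousOn_log.mono fun r hr => ne_of_gt (hpos r hr)).pow 2)
    have hcg : ContinuousOn (fun r : ℝ => Real.exp (-(q * A)) * r ^ (1 - q'))
        (Set.uIcc (Real.exp (-B)) (Real.exp (-A))) := by
      apply ContinuousOn.mul continuousOn_const
      exact ContinuousOn.rpow_const continuousOn_id
        fun r hr => Or.inl (ne_of_gt (hpos r hr))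
    have hif : IntervalIntegrable (fun r => Real.exp (q * (Real.log r) ^ 2 / B) * r)
        volume (Real.exp (-B)) (Real.exp (-A)) := hcf.intervalIntegrable
    have hig : IntervalIntegrable (fun r : ℝ => Real.exp (-(q * A)) * r ^ (1 - q'))
        volume (Real.exp (-B)) (Real.exp (-A)) := hcg.intervalIntegrable
    -- pointwise bound
    have hpt : ∀ r ∈ Set.Icc (Real.exp (-B)) (Real.exp (-A)),
        Real.exp (q * (Real.log r) ^ 2 / B) * r
          ≤ Real.exp (-(q * A)) * r ^ (1 - q') := by
      intro r hr
      have hr0 : 0 < r := lt_of_lt_of_le (Real.exp_pos _) hr.1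
      set L := Real.log r with hLdef
      have hL1 : -B ≤ L := (Real.le_log_iff_exp_le hr0).mpr hr.1
      have hL2 : L ≤ -A := (Real.log_le_iff_le_exp hr0).mpr hr.2
      have hkey := aux_exponent_bound q A B L hq0 hB hL1 hL2
      calc Real.exp (q * L ^ 2 / B) * r
          = Real.exp (q * L ^ 2 / B + L) := by
            rw [Real.exp_add, Real.exp_log hr0]
        _ ≤ Real.exp (-(q * A) + (1 - q') * L) := Real.exp_le_exp.mpr hkey
        _ = Real.exp (-(q * A)) * r ^ (1 - q') := by
            rw [Real.exp_add, Real.rpow_def_of_pos hr0]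
            ring_nf
            rfl
    have hmono := intervalIntegral.integral_mono_on hle hif hig hpt
    calc Real.exp (p * A) *
          ∫ r in Real.exp (-B)..Real.exp (-A), Real.exp (q * (Real.log r) ^ 2 / B) * r
        ≤ Real.exp (p * A) *
          ∫ r in Real.exp (-B)..Real.exp (-A), Real.exp (-(q * A)) * r ^ (1 - q') :=
          mul_le_mul_of_nonneg_left hmono (Real.exp_pos _).le
      _ = Real.exp (p * A) * (Real.exp (-(q * A)) *
          ((Real.exp (-A) ^ (2 - q') - Real.exp (-B) ^ (2 - q')) / (2 - q'))) := by
          rw [intervalIntegral.integral_const_mul,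
            integral_rpow (Or.inl (by linarith : (-1 : ℝ) < 1 - q')),
            show (1 : ℝ) - q' + 1 = 2 - q' by ring]
      _ ≤ Real.exp (p * A) * (Real.exp (-(q * A)) *
          (Real.exp (-A) ^ (2 - q') / (2 - q'))) := by
          gcongr
          have : (0 : ℝ) ≤ Real.exp (-B) ^ (2 - q') :=
            Real.rpow_nonneg (Real.exp_pos _).le _
          linarith
      _ = Real.exp (p * A - q * A + (-A) * (2 - q')) / (2 - q') := by
          rw [Real.rpow_def_of_pos (Real.exp_pos _), Real.log_exp,
            show p * A - q * A + -A * (2 - q')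
              = p * A + (-(q * A) + -A * (2 - q')) by ring,
            Real.exp_add, Real.exp_add]
          ring
      _ ≤ Real.exp (-((2 - p) / 2) * A) / ((2 - q) / 2) := by
          apply div_le_div₀ (Real.exp_pos _).le ?_ (by linarith) h2q'
          apply Real.exp_le_exp.mpr
          have e1 : p * A - q * A + (-A) * (2 - q') = (p - 2) * A + q * (A / B) * A := by
            rw [hq'1]; ring
          have e2 : q * (A / B) * A ≤ (2 - p) / 2 * A :=
            mul_le_mul_of_nonneg_right hsp hA.le
          rw [e1]; linarith
      _ = 2 / (2 - q) * Real.exp (-((2 - p) / 2) * a n) := by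
          rw [hAdef, div_div_eq_mul_div]
          ring
  · -- the dominating sequence tends to 0
    have h1 : Tendsto (fun n => -((2 - p) / 2) * a n) atTop atBot := by
      apply Tendsto.const_mul_atTop_of_neg (by linarith : -((2 - p) / 2) < 0) ha.2
    have h2 : Tendsto (fun n => Real.exp (-((2 - p) / 2) * a n)) atTop (nhds 0) :=
      Real.tendsto_exp_atBot.comp h1
    simpa using h2.const_mul (2 / (2 - q))
end
end

section
/- Let (α_n) be a scale, ψ a profile, and set g_n(x) = √(α_n/(2π)) ψ(−log|x| / α_n). Then for every smooth compactly supported function φ ∈ C_c^∞(ℝ²), ∫_{ℝ²} |∇g_n(x)|² φ(x) dx → ‖ψ'‖²_{L²(ℝ)} φ(0) as n → ∞; that is, the measures |∇g_n(x)|² dx converge to ‖ψ'‖²_{L²} δ₀ in the sense of distributions. -/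
open MeasureTheory Real Filter Topology

noncomputable section

theorem grad_radial {α : ℝ} (hα : 0 < α) {ψ : ℝ → ℝ} {d : ℝ} {z : Plane} (hz : z ≠ 0)
    (hd : HasDerivAt ψ d (-Real.log ‖z‖ / α)) :
    HasGradientAt (fun z : Plane => Real.sqrt (α / (2 * π)) * ψ (-Real.log ‖z‖ / α))
      ((-(Real.sqrt (α / (2 * π)) * d) / (α * ‖z‖ ^ 2)) • z) z := by
  set c := Real.sqrt (α / (2 * π)) with hc
  have hzn : (0:ℝ) < ‖z‖ := norm_pos_iff.2 hz
  have hinner : ∀ w : Plane, (inner ℝ w w : ℝ) = ‖w‖ ^ 2 := real_inner_self_eq_norm_sq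
  set t₀ : ℝ := (inner ℝ z z : ℝ) with ht₀
  have ht₀pos : 0 < t₀ := by rw [ht₀, hinner]; positivity
  have hzz : t₀ ≠ 0 := ne_of_gt ht₀pos
  have hlogt₀ : Real.log t₀ = 2 * Real.log ‖z‖ := by
    rw [ht₀, hinner]; rw [Real.log_pow]; push_cast; ring
  have hfun : (fun w : Plane => c * ψ (-Real.log ‖w‖ / α)) =
      fun w : Plane => c * ψ (-Real.log (inner ℝ w w : ℝ) / (2*α)) := by
    funext w
    congr 2
    rw [hinner w, Real.log_pow]
    push_cast; ring
  rw [hfun]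
  have h1 : HasFDerivAt (fun w : Plane => (inner ℝ w w : ℝ))
      ((fderivInnerCLM ℝ ((z:Plane), z)).comp ((ContinuousLinearMap.id ℝ Plane).prod
        (ContinuousLinearMap.id ℝ Plane))) z :=
    (hasFDerivAt_id z).inner ℝ (hasFDerivAt_id z)
  have h4 : HasDerivAt (fun t : ℝ => -Real.log t/(2*α)) (-(t₀⁻¹)/(2*α)) t₀ := by
    simpa using ((Real.hasDerivAt_log hzz).neg.div_const (2*α))
  have hpt : -Real.log t₀/(2*α) = -Real.log ‖z‖ / α := by
    rw [hlogt₀]; field_simp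
  have h5 : HasDerivAt (fun t : ℝ => ψ (-Real.log t/(2*α))) (d * (-(t₀⁻¹)/(2*α))) t₀ := by
    have := (hpt ▸ hd).comp t₀ h4
    exact this
  have h6 : HasDerivAt (fun t : ℝ => c * ψ (-Real.log t/(2*α))) (c * (d * (-(t₀⁻¹)/(2*α)))) t₀ :=
    h5.const_mul c
  have h7 := h6.comp_hasFDerivAt z h1
  have hCLM : ((c * (d * (-(t₀⁻¹)/(2*α)))) • ((fderivInnerCLM ℝ ((z:Plane), z)).comp
      ((ContinuousLinearMap.id ℝ Plane).prod (ContinuousLinearMap.id ℝ Plane))))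
      = (InnerProductSpace.toDual ℝ Plane) ((-(c * d) / (α * ‖z‖ ^ 2)) • z) := by
    ext w
    simp only [ContinuousLinearMap.smul_apply, ContinuousLinearMap.comp_apply,
      ContinuousLinearMap.prod_apply, ContinuousLinearMap.id_apply, fderivInnerCLM_apply,
      InnerProductSpace.toDual_apply_apply, real_inner_smul_left]
    have : (inner ℝ w z : ℝ) = (inner ℝ z w : ℝ) := (real_inner_comm w z).symm
    rw [this]
    have ht : t₀ = ‖z‖ ^ 2 := by rw [ht₀, hinner]
    rw [ht]
    have h2 : (‖z‖:ℝ)^2 ≠ 0 := by positivity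
    field_simp
    have h3 : ‖z‖ ≠ 0 := ne_of_gt hzn
    have h4 : α ≠ 0 := ne_of_gt hα
    rw [smul_eq_mul]
    field_simp
    ring
  rw [hCLM] at h7
  have h8 := h7.hasGradientAt
  rw [LinearIsometryEquiv.symm_apply_apply] at h8
  exact h8


def pmap (α : ℝ) (p : Plane) : Plane :=
  (WithLp.equiv 2 (Fin 2 → ℝ)).symm
    ![Real.exp (-α * p 0) * Real.cos (p 1), Real.exp (-α * p 0) * Real.sin (p 1)]

def pd (α : ℝ) (p : Plane) : Plane →L[ℝ] Plane :=
  (PiLp.continuousLinearEquiv 2 ℝ (fun _ : Fin 2 => ℝ)).symm.toContinuousLinearMap.comp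
    (ContinuousLinearMap.pi
      ![Real.exp (-α * p 0) • ((-Real.sin (p 1)) • EuclideanSpace.proj (𝕜 := ℝ) (ι := Fin 2) 1) +
          Real.cos (p 1) • ((Real.exp (-α * p 0) * (-α)) • EuclideanSpace.proj (𝕜 := ℝ) (ι := Fin 2) 0),
        Real.exp (-α * p 0) • ((Real.cos (p 1)) • EuclideanSpace.proj (𝕜 := ℝ) (ι := Fin 2) 1) +
          Real.sin (p 1) • ((Real.exp (-α * p 0) * (-α)) • EuclideanSpace.proj (𝕜 := ℝ) (ι := Fin 2) 0)])

lemma pmap_apply_zero (α : ℝ) (p : Plane) :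
    pmap α p 0 = Real.exp (-α * p 0) * Real.cos (p 1) := rfl

lemma pmap_apply_one (α : ℝ) (p : Plane) :
    pmap α p 1 = Real.exp (-α * p 0) * Real.sin (p 1) := rfl

lemma norm_pmap (α : ℝ) (p : Plane) : ‖pmap α p‖ = Real.exp (-α * p 0) := by
  rw [EuclideanSpace.norm_eq]
  rw [Fin.sum_univ_two]
  rw [pmap_apply_zero, pmap_apply_one]
  have : ‖Real.exp (-α * p 0) * Real.cos (p 1)‖ ^ 2 + ‖Real.exp (-α * p 0) * Real.sin (p 1)‖ ^ 2
      = Real.exp (-α * p 0) ^ 2 := by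
    simp only [Real.norm_eq_abs, sq_abs]
    have := Real.sin_sq_add_cos_sq (p 1)
    nlinarith [this]
  rw [this, Real.sqrt_sq (Real.exp_nonneg _)]

lemma hasFDerivAt_pmap (α : ℝ) (p : Plane) : HasFDerivAt (pmap α) (pd α p) p := by
  have hproj0 : HasFDerivAt (fun q : Plane => q 0) (EuclideanSpace.proj (𝕜 := ℝ) (ι := Fin 2) 0) p := by
    exact (EuclideanSpace.proj (𝕜 := ℝ) (ι := Fin 2) 0 : Plane →L[ℝ] ℝ).hasFDerivAt
  have hproj1 : HasFDerivAt (fun q : Plane => q 1) (EuclideanSpace.proj (𝕜 := ℝ) (ι := Fin 2) 1) p := by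
    exact (EuclideanSpace.proj (𝕜 := ℝ) (ι := Fin 2) 1 : Plane →L[ℝ] ℝ).hasFDerivAt
  have hexp : HasFDerivAt (fun q : Plane => Real.exp (-α * q 0))
      ((Real.exp (-α * p 0) * (-α)) • EuclideanSpace.proj (𝕜 := ℝ) (ι := Fin 2) 0) p := by
    have h1 : HasDerivAt (fun t : ℝ => Real.exp (-α * t)) (Real.exp (-α * p 0) * (-α)) (p 0) := by
      simpa using ((hasDerivAt_id (p 0)).const_mul (-α)).exp
    exact h1.comp_hasFDerivAt p hproj0
  have hcos : HasFDerivAt (fun q : Plane => Real.cos (q 1))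
      ((-Real.sin (p 1)) • EuclideanSpace.proj (𝕜 := ℝ) (ι := Fin 2) 1) p :=
    (Real.hasDerivAt_cos (p 1)).comp_hasFDerivAt (f := fun q : Plane => q 1) p hproj1
  have hsin : HasFDerivAt (fun q : Plane => Real.sin (q 1))
      ((Real.cos (p 1)) • EuclideanSpace.proj (𝕜 := ℝ) (ι := Fin 2) 1) p :=
    (Real.hasDerivAt_sin (p 1)).comp_hasFDerivAt (f := fun q : Plane => q 1) p hproj1
  have h0 : HasFDerivAt (fun q : Plane => Real.exp (-α * q 0) * Real.cos (q 1))
      (Real.exp (-α * p 0) • ((-Real.sin (p 1)) • EuclideanSpace.proj (𝕜 := ℝ) (ι := Fin 2) 1) +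
        Real.cos (p 1) • ((Real.exp (-α * p 0) * (-α)) • EuclideanSpace.proj (𝕜 := ℝ) (ι := Fin 2) 0)) p :=
    hexp.mul hcos
  have h1 : HasFDerivAt (fun q : Plane => Real.exp (-α * q 0) * Real.sin (q 1))
      (Real.exp (-α * p 0) • ((Real.cos (p 1)) • EuclideanSpace.proj (𝕜 := ℝ) (ι := Fin 2) 1) +
        Real.sin (p 1) • ((Real.exp (-α * p 0) * (-α)) • EuclideanSpace.proj (𝕜 := ℝ) (ι := Fin 2) 0)) p :=
    hexp.mul hsin
  have hF0 : HasFDerivAt (fun q : Plane =>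
      (![Real.exp (-α * q 0) * Real.cos (q 1), Real.exp (-α * q 0) * Real.sin (q 1)] : Fin 2 → ℝ))
      (ContinuousLinearMap.pi
      ![Real.exp (-α * p 0) • ((-Real.sin (p 1)) • EuclideanSpace.proj (𝕜 := ℝ) (ι := Fin 2) 1) +
          Real.cos (p 1) • ((Real.exp (-α * p 0) * (-α)) • EuclideanSpace.proj (𝕜 := ℝ) (ι := Fin 2) 0),
        Real.exp (-α * p 0) • ((Real.cos (p 1)) • EuclideanSpace.proj (𝕜 := ℝ) (ι := Fin 2) 1) +
          Real.sin (p 1) • ((Real.exp (-α * p 0) * (-α)) • EuclideanSpace.proj (𝕜 := ℝ) (ι := Fin 2) 0)]) p := by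
    apply hasFDerivAt_pi''
    intro i
    rw [ContinuousLinearMap.proj_pi]
    fin_cases i
    · simpa using h0
    · simpa using h1
  have := ((PiLp.continuousLinearEquiv 2 ℝ
      (fun _ : Fin 2 => ℝ)).symm.toContinuousLinearMap.hasFDerivAt (x := (![Real.exp (-α * p 0) * Real.cos (p 1), Real.exp (-α * p 0) * Real.sin (p 1)] : Fin 2 → ℝ))).comp p hF0
  exact this

lemma det_pd (α : ℝ) (p : Plane) : (pd α p).det = -(α * Real.exp (-α * p 0) ^ 2) := by
  have h := LinearMap.det_toMatrix (PiLp.basisFun 2 ℝ (Fin 2)) ((pd α p) : Plane →ₗ[ℝ] Plane)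
  rw [ContinuousLinearMap.det, ← h, Matrix.det_fin_two]
  simp only [LinearMap.toMatrix_apply, PiLp.basisFun_repr, PiLp.basisFun_apply,
    ContinuousLinearMap.coe_coe]
  simp only [pd, ContinuousLinearMap.comp_apply, ContinuousLinearMap.pi_apply,
    ContinuousLinearEquiv.coe_coe]
  simp only [PiLp.continuousLinearEquiv_symm_apply]
  simp only [ContinuousLinearMap.pi_apply, Matrix.cons_val_zero, Matrix.cons_val_one,
    Matrix.head_cons, ContinuousLinearMap.add_apply, ContinuousLinearMap.smul_apply,
    Pi.single_apply, smul_eq_mul]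
  norm_num
  linear_combination (-(α) * Real.exp (-(α * p 0)) ^ 2) * Real.sin_sq_add_cos_sq (p 1)


def Tmap : Plane ≃ᵐ ℝ × ℝ :=
  (MeasurableEquiv.toLp 2 (Fin 2 → ℝ)).symm.trans MeasurableEquiv.finTwoArrow

lemma Tmap_apply (p : Plane) : Tmap p = (p 0, p 1) := rfl

lemma Tmap_mp : MeasurePreserving Tmap volume volume :=
  (volume_preserving_finTwoArrow ℝ).comp (EuclideanSpace.volume_preserving_symm_measurableEquiv_toLp (Fin 2))

lemma plane_null {N : Set ℝ} (hN : MeasurableSet N) (h0 : volume N = 0) :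
    volume {p : Plane | p 0 ∈ N} = 0 := by
  have : {p : Plane | p 0 ∈ N} = Tmap ⁻¹' (N ×ˢ Set.univ) := by
    ext p; simp [Tmap_apply]
  rw [this, Tmap_mp.measure_preimage ((hN.prod MeasurableSet.univ).nullMeasurableSet)]
  rw [show (volume : Measure (ℝ×ℝ)) = (volume : Measure ℝ).prod volume from (MeasureTheory.Measure.volume_eq_prod ℝ ℝ), Measure.prod_prod, h0, zero_mul]

lemma plane_null' {N : Set ℝ} (hN : MeasurableSet N) (h0 : volume N = 0) :
    volume {p : Plane | p 1 ∈ N} = 0 := by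
  have : {p : Plane | p 1 ∈ N} = Tmap ⁻¹' (Set.univ ×ˢ N) := by
    ext p; simp [Tmap_apply]
  rw [this, Tmap_mp.measure_preimage ((MeasurableSet.univ.prod hN).nullMeasurableSet)]
  rw [show (volume : Measure (ℝ×ℝ)) = (volume : Measure ℝ).prod volume from (MeasureTheory.Measure.volume_eq_prod ℝ ℝ), Measure.prod_prod, h0, mul_zero]

lemma plane_integrable_prod {h g : ℝ → ℝ} (hh : Integrable h volume) (hg : Integrable g volume) :
    Integrable (fun p : Plane => h (p 0) * g (p 1)) volume := by
  have h1 : Integrable (fun q : ℝ × ℝ => h q.1 * g q.2) (volume.prod volume) := hh.mul_prod hg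
  have h1' : Integrable (fun q : ℝ × ℝ => h q.1 * g q.2) volume := by
    rwa [MeasureTheory.Measure.volume_eq_prod]
  have h2 : Integrable ((fun q : ℝ × ℝ => h q.1 * g q.2) ∘ Tmap) volume :=
    ((Tmap_mp.integrable_comp_emb Tmap.measurableEmbedding)).2 h1'
  exact h2

lemma plane_integral_prod (h g : ℝ → ℝ) :
    ∫ p : Plane, h (p 0) * g (p 1) = (∫ t, h t) * ∫ t, g t := by
  have h2 := Tmap_mp.integral_comp Tmap.measurableEmbedding (fun q : ℝ × ℝ => h q.1 * g q.2)
  have h3 : (volume : Measure (ℝ × ℝ)) = (volume : Measure ℝ).prod volume := by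
    exact MeasureTheory.Measure.volume_eq_prod ℝ ℝ
  calc ∫ p : Plane, h (p 0) * g (p 1) = ∫ q : ℝ × ℝ, h q.1 * g q.2 := by
        simpa [Function.comp, Tmap_apply] using h2
    _ = (∫ t, h t) * ∫ t, g t := by rw [h3, integral_prod_mul]

def Spolar : Set Plane := {p : Plane | p 1 ∈ Set.Ioo (-π) π}

lemma measurableSet_Spolar : MeasurableSet Spolar := by
  have : Spolar = (fun p : Plane => p 1) ⁻¹' (Set.Ioo (-π) π) := rfl
  rw [this]
  exact measurableSet_Ioo.preimage (by
    have : Measurable (fun p : Plane => p 1) :=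
      (continuous_apply (1 : Fin 2)).measurable.comp (MeasurableEquiv.toLp 2 (Fin 2 → ℝ)).symm.measurable
    exact this)

lemma theta_inj {v w : ℝ} (hv : v ∈ Set.Ioo (-π) π) (hw : w ∈ Set.Ioo (-π) π)
    (hc : Real.cos v = Real.cos w) (hs : Real.sin v = Real.sin w) : v = w := by
  have h1 : (Complex.cos v + Complex.sin v * Complex.I).arg = v :=
    Complex.arg_cos_add_sin_mul_I ⟨hv.1, le_of_lt hv.2⟩
  have h2 : (Complex.cos w + Complex.sin w * Complex.I).arg = w :=
    Complex.arg_cos_add_sin_mul_I ⟨hw.1, le_of_lt hw.2⟩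
  have heq : (Complex.cos v + Complex.sin v * Complex.I) =
      (Complex.cos w + Complex.sin w * Complex.I) := by
    rw [← Complex.ofReal_cos, ← Complex.ofReal_sin, ← Complex.ofReal_cos, ← Complex.ofReal_sin,
      hc, hs]
  rw [← h1, heq, h2]

lemma injOn_pmap {α : ℝ} (hα : 0 < α) : Set.InjOn (pmap α) Spolar := by
  intro p hp q hq h
  have h0 := congrArg (fun v : Plane => v 0) h
  have h1 := congrArg (fun v : Plane => v 1) h
  simp only [pmap_apply_zero, pmap_apply_one] at h0 h1
  have hnorm : Real.exp (-α * p 0) = Real.exp (-α * q 0) := by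
    have e1 : (Real.exp (-α * p 0) * Real.cos (p 1))^2 + (Real.exp (-α * p 0) * Real.sin (p 1))^2
        = Real.exp (-α * p 0)^2 := by
      linear_combination Real.exp (-α * p 0)^2 * Real.sin_sq_add_cos_sq (p 1)
    have e2 : (Real.exp (-α * q 0) * Real.cos (q 1))^2 + (Real.exp (-α * q 0) * Real.sin (q 1))^2
        = Real.exp (-α * q 0)^2 := by
      linear_combination Real.exp (-α * q 0)^2 * Real.sin_sq_add_cos_sq (q 1)
    rw [h0, h1] at e1
    have hsq : Real.exp (-α * p 0) ^ 2 = Real.exp (-α * q 0) ^ 2 := by linarith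
    nlinarith [Real.exp_pos (-α * p 0), Real.exp_pos (-α * q 0)]
  have hp0 : p 0 = q 0 := by
    have h' := Real.exp_eq_exp.mp hnorm
    exact mul_left_cancel₀ (neg_ne_zero.mpr (ne_of_gt hα)) h'
  have hE := Real.exp_pos (-α * p 0)
  rw [← hnorm] at h0 h1
  have hc : Real.cos (p 1) = Real.cos (q 1) := mul_left_cancel₀ (ne_of_gt hE) h0
  have hs : Real.sin (p 1) = Real.sin (q 1) := mul_left_cancel₀ (ne_of_gt hE) h1
  have hp1 : p 1 = q 1 := theta_inj hp hq hc hs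
  ext i
  fin_cases i
  · exact hp0
  · exact hp1

lemma pmap_image {α : ℝ} (hα : 0 < α) (z : Plane) (hz : ¬(z 1 = 0 ∧ z 0 ≤ 0)) :
    z ∈ pmap α '' Spolar := by
  set w : ℂ := ⟨z 0, z 1⟩ with hw
  have hw0 : w ≠ 0 := by
    intro hc
    apply hz
    have hre : z 0 = 0 := by simpa using congrArg Complex.re hc
    have him : z 1 = 0 := by simpa using congrArg Complex.im hc
    exact ⟨him, le_of_eq hre⟩
  have habs : (0:ℝ) < ‖w‖ := norm_pos_iff.mpr hw0
  have habs' : ‖w‖ ≠ 0 := ne_of_gt habs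
  have harg : Complex.arg w ∈ Set.Ioo (-π) π := by
    rcases Complex.arg_mem_Ioc w with ⟨hl, hr⟩
    refine ⟨hl, lt_of_le_of_ne hr ?_⟩
    intro hpi
    rw [Complex.arg_eq_pi_iff] at hpi
    exact hz ⟨hpi.2, le_of_lt hpi.1⟩
  set p : Plane := (WithLp.equiv 2 (Fin 2 → ℝ)).symm ![-Real.log (‖w‖) / α, Complex.arg w] with hp
  have hp0 : p 0 = -Real.log (‖w‖) / α := rfl
  have hp1 : p 1 = Complex.arg w := rfl
  refine ⟨p, by show p 1 ∈ Set.Ioo (-π) π; rw [hp1]; exact harg, ?_⟩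
  have hexp : Real.exp (-α * p 0) = ‖w‖ := by
    rw [hp0]
    have : -α * (-Real.log (‖w‖) / α) = Real.log (‖w‖) := by
      field_simp
    rw [this, Real.exp_log habs]
  ext i
  fin_cases i
  · show pmap α p 0 = z 0
    rw [pmap_apply_zero, hexp, hp1, Complex.cos_arg hw0]
    field_simp
    rfl
  · show pmap α p 1 = z 1
    rw [pmap_apply_one, hexp, hp1, Complex.sin_arg]
    field_simp
    rfl


lemma key_bound {g : ℝ → ℝ} (hloc : LocallyIntegrable g volume) (x a b r : ℝ) (hab : a ≤ b)
    (hsub : Set.Ioc a b ⊆ Metric.closedBall x r) :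
    ‖(∫ t in Set.Ioc a b, g t) - (b - a) * g x‖ ≤ ∫ t in Metric.closedBall x r, ‖g t - g x‖ := by
  have hI : IntegrableOn g (Set.Ioc a b) volume :=
    (hloc.integrableOn_isCompact isCompact_Icc).mono_set Set.Ioc_subset_Icc_self
  have hconst : IntegrableOn (fun _ : ℝ => g x) (Set.Ioc a b) volume := by
    apply (integrableOn_const_iff).mpr
    right; rw [Real.volume_Ioc]; exact ENNReal.ofReal_lt_top
  have h1 : (∫ t in Set.Ioc a b, g t) - (b - a) * g x
      = ∫ t in Set.Ioc a b, (g t - g x) := by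
    rw [integral_sub hI hconst, setIntegral_const, Real.volume_real_Ioc,
      max_eq_left (by linarith), smul_eq_mul]
  rw [h1]
  calc ‖∫ t in Set.Ioc a b, (g t - g x)‖ ≤ ∫ t in Set.Ioc a b, ‖g t - g x‖ :=
        norm_integral_le_integral_norm _
    _ ≤ ∫ t in Metric.closedBall x r, ‖g t - g x‖ := by
        apply setIntegral_mono_set
        · exact ((hloc.integrableOn_isCompact (isCompact_closedBall x r)).sub
            ((integrableOn_const_iff).mpr (Or.inr (by
              rw [Real.volume_closedBall]; exact ENNReal.ofReal_lt_top)))).norm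
        · filter_upwards with t using norm_nonneg _
        · exact HasSubset.Subset.eventuallyLE hsub

lemma profile_ae_diff {ψ : ℝ → ℝ} (hψ0 : ∀ s ≤ 0, ψ s = 0)
    (hL2 : MemLp (deriv ψ) 2 volume)
    (hrep : ∀ s, ψ s = ∫ t in Set.Ioc (0:ℝ) s, deriv ψ t) :
    ∀ᵐ x : ℝ, DifferentiableAt ℝ ψ x := by
  set g := deriv ψ with hg
  have hloc : LocallyIntegrable g volume := hL2.locallyIntegrable one_le_two
  have hx0 : ∀ᵐ x : ℝ, x ≠ 0 := by
    rw [ae_iff]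
    simpa using measure_singleton (0:ℝ)
  have hleb0 := IsUnifLocDoublingMeasure.ae_tendsto_average_norm_sub (volume : Measure ℝ) hloc 1
  filter_upwards [hx0, hleb0] with x hxne hx
  have hleb : Tendsto (fun r : ℝ => ⨍ y in Metric.closedBall x r, ‖g y - g x‖)
      (𝓝[>] (0:ℝ)) (𝓝 0) := by
    apply hx (fun _ => x) id tendsto_id
    filter_upwards [self_mem_nhdsWithin] with r (hr : r ∈ Set.Ioi (0:ℝ))
    simp only [Metric.mem_closedBall, dist_self, one_mul]
    exact le_of_lt hr
  rcases lt_or_gt_of_ne hxne with hneg | hpos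
  · -- x < 0 : locally zero
    have hev : ψ =ᶠ[𝓝 x] fun _ => (0:ℝ) := by
      filter_upwards [Iio_mem_nhds hneg] with y (hy : y < 0)
      exact hψ0 y (le_of_lt hy)
    exact (differentiableAt_const (0:ℝ)).congr_of_eventuallyEq hev
  · -- x > 0
    have : HasDerivAt ψ (g x) x := by
      rw [hasDerivAt_iff_isLittleO, Asymptotics.isLittleO_iff]
      intro c hc
      have hev : ∀ᶠ r in 𝓝[>] (0:ℝ),
          (⨍ y in Metric.closedBall x r, ‖g y - g x‖) < c/2 :=
        hleb.eventually_lt_const (by linarith)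
      rcases mem_nhdsGT_iff_exists_Ioo_subset.mp hev with ⟨δ, (hδ : δ ∈ Set.Ioi (0:ℝ)), hδsub⟩
      have hball : Metric.ball x (min δ x) ∈ 𝓝 x :=
        Metric.ball_mem_nhds x (lt_min hδ hpos)
      filter_upwards [hball] with y hy
      rcases eq_or_ne y x with rfl | hyx
      · simp
      · have hd : dist y x < min δ x := Metric.mem_ball.mp hy
        set r : ℝ := |y - x| with hr
        have hrpos : 0 < r := by rw [hr]; exact abs_pos.mpr (sub_ne_zero.mpr hyx)
        have hrδ : r < δ := by
          have : dist y x < δ := lt_of_lt_of_le hd (min_le_left _ _)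
          rwa [Real.dist_eq] at this
        have hypos : 0 < y := by
          have : dist y x < x := lt_of_lt_of_le hd (min_le_right _ _)
          rw [Real.dist_eq] at this
          cases abs_lt.mp this with
          | intro h1 h2 => linarith
        have havg : (⨍ t in Metric.closedBall x r, ‖g t - g x‖) < c/2 :=
          hδsub ⟨hrpos, hrδ⟩
        have hint_cb : ∫ t in Metric.closedBall x r, ‖g t - g x‖
            = (2*r) * ⨍ t in Metric.closedBall x r, ‖g t - g x‖ := by
          rw [setAverage_eq, smul_eq_mul, Real.volume_real_closedBall (by linarith)]
          field_simp
        have hbnd : ∫ t in Metric.closedBall x r, ‖g t - g x‖ ≤ c * r := by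
          rw [hint_cb]
          calc (2*r) * ⨍ t in Metric.closedBall x r, ‖g t - g x‖ ≤ (2*r) * (c/2) := by
                apply mul_le_mul_of_nonneg_left (le_of_lt havg) (by linarith)
            _ = c * r := by ring
        rcases le_or_gt x y with hxy | hyx'
        · -- x ≤ y
          have hsplit : ψ y - ψ x = ∫ t in Set.Ioc x y, g t := by
            rw [hrep y, hrep x]
            rw [← Set.Ioc_union_Ioc_eq_Ioc (le_of_lt hpos) hxy]
            rw [setIntegral_union (Set.Ioc_disjoint_Ioc_of_le le_rfl) measurableSet_Ioc
              ((hloc.integrableOn_isCompact isCompact_Icc).mono_set Set.Ioc_subset_Icc_self)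
              ((hloc.integrableOn_isCompact isCompact_Icc).mono_set Set.Ioc_subset_Icc_self)]
            ring
          have hsub : Set.Ioc x y ⊆ Metric.closedBall x r := by
            intro t ht
            rw [Metric.mem_closedBall, Real.dist_eq, hr, abs_of_nonneg (by linarith : (0:ℝ) ≤ y - x)]
            rw [abs_le]
            constructor <;> [linarith [ht.1]; linarith [ht.2]]
          have := key_bound hloc x x y r hxy hsub
          rw [← hsplit] at this
          calc ‖ψ y - ψ x - (y - x) • g x‖ = ‖(ψ y - ψ x) - (y - x) * g x‖ := by
                rw [smul_eq_mul]
            _ ≤ ∫ t in Metric.closedBall x r, ‖g t - g x‖ := this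
            _ ≤ c * r := hbnd
            _ = c * ‖y - x‖ := by
                rw [Real.norm_eq_abs, hr]
        · -- y < x
          have hsplit : ψ x - ψ y = ∫ t in Set.Ioc y x, g t := by
            rw [hrep y, hrep x]
            rw [← Set.Ioc_union_Ioc_eq_Ioc (le_of_lt hypos) (le_of_lt hyx')]
            rw [setIntegral_union (Set.Ioc_disjoint_Ioc_of_le le_rfl) measurableSet_Ioc
              ((hloc.integrableOn_isCompact isCompact_Icc).mono_set Set.Ioc_subset_Icc_self)
              ((hloc.integrableOn_isCompact isCompact_Icc).mono_set Set.Ioc_subset_Icc_self)]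
            ring
          have hsub : Set.Ioc y x ⊆ Metric.closedBall x r := by
            intro t ht
            rw [Metric.mem_closedBall, Real.dist_eq, hr, abs_of_nonpos (by linarith : y - x ≤ 0)]
            rw [abs_le]
            constructor <;> [linarith [ht.1]; linarith [ht.2]]
          have := key_bound hloc x y x r (le_of_lt hyx') hsub
          rw [← hsplit] at this
          calc ‖ψ y - ψ x - (y - x) • g x‖ = ‖(ψ x - ψ y) - (x - y) * g x‖ := by
                rw [smul_eq_mul, ← norm_neg]; congr 1; ring
            _ ≤ ∫ t in Metric.closedBall x r, ‖g t - g x‖ := this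
            _ ≤ c * r := hbnd
            _ = c * ‖y - x‖ := by
                rw [Real.norm_eq_abs, hr]
    exact this.differentiableAt
section MainAux
variable {a : ℕ → ℝ} {ψ : ℝ → ℝ} {f : Plane → ℝ}

lemma continuous_p0 : Continuous (fun p : Plane => p 0) := by
  exact (EuclideanSpace.proj (𝕜 := ℝ) (ι := Fin 2) 0).continuous

lemma continuous_pmap (α : ℝ) : Continuous (pmap α) := by
  rw [continuous_iff_continuousAt]
  exact fun p => (hasFDerivAt_pmap α p).continuousAt

lemma deriv_zero_of_neg (hψ0 : ∀ s ≤ 0, ψ s = 0) {t : ℝ} (ht : t < 0) : deriv ψ t = 0 := by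
  have hev : ψ =ᶠ[nhds t] fun _ => (0:ℝ) := by
    filter_upwards [Iio_mem_nhds ht] with y (hy : y < 0)
    exact hψ0 y (le_of_lt hy)
  rw [hev.deriv_eq]
  exact deriv_const t 0

/-- The key change-of-variables identity for a fixed scale `α`. -/
lemma step1 {α : ℝ} (hα : 0 < α) (hψ : IsProfile ψ) (f : Plane → ℝ) :
    ∫ x : Plane, ‖gradient (fun z : Plane =>
        Real.sqrt (α / (2 * Real.pi)) * ψ (-Real.log ‖z‖ / α)) x‖ ^ 2 * f x
      = ∫ p in Spolar, (deriv ψ (p 0))^2 * f (pmap α p) / (2*π) := by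
  set G : Plane → ℝ := fun x => ‖gradient (fun z : Plane =>
      Real.sqrt (α / (2 * Real.pi)) * ψ (-Real.log ‖z‖ / α)) x‖ ^ 2 * f x with hG
  -- (a) restrict to the image
  have hcompl : volume ((pmap α '' Spolar)ᶜ) = 0 := by
    have hsub : (pmap α '' Spolar)ᶜ ⊆ {z : Plane | z 1 = 0} := by
      intro z hzc
      by_contra hz1
      rcases Classical.em (z 1 = 0 ∧ z 0 ≤ 0) with hb | hb
      · exact hz1 hb.1
      · exact hzc (pmap_image hα z hb)
    exact measure_mono_null hsub (plane_null' (measurableSet_singleton 0) (measure_singleton 0))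
  have ha : ∫ x : Plane, G x = ∫ x in pmap α '' Spolar, G x := by
    rw [← setIntegral_univ (f := G)]
    exact (setIntegral_congr_set (MeasureTheory.ae_eq_univ.mpr hcompl)).symm
  -- (b) change of variables
  have hb : ∫ x in pmap α '' Spolar, G x
      = ∫ p in Spolar, |(pd α p).det| • G (pmap α p) := by
    exact integral_image_eq_integral_abs_det_fderiv_smul volume measurableSet_Spolar
      (fun p _ => (hasFDerivAt_pmap α p).hasFDerivWithinAt) (injOn_pmap hα) G
  -- (c) pointwise identification a.e.
  have hdiffae : ∀ᵐ p : Plane, DifferentiableAt ℝ ψ (p 0) := by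
    have hN : volume {x : ℝ | ¬ DifferentiableAt ℝ ψ x} = 0 := by
      have := profile_ae_diff hψ.1 hψ.2.1 hψ.2.2.2
      rwa [ae_iff] at this
    have hNm : MeasurableSet {x : ℝ | ¬ DifferentiableAt ℝ ψ x} :=
      (measurableSet_of_differentiableAt ℝ ψ).compl
    have := plane_null hNm hN
    rw [ae_iff]
    exact this
  have hc : ∫ p in Spolar, |(pd α p).det| • G (pmap α p)
      = ∫ p in Spolar, (deriv ψ (p 0))^2 * f (pmap α p) / (2*π) := by
    apply integral_congr_ae
    rw [EventuallyEq, ae_restrict_iff' measurableSet_Spolar]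
    filter_upwards [hdiffae] with p hdiff _
    -- compute the gradient at pmap α p
    set z : Plane := pmap α p with hz
    have hnz : ‖z‖ = Real.exp (-α * p 0) := norm_pmap α p
    have hzne : z ≠ 0 := by
      intro h0
      rw [h0, norm_zero] at hnz
      exact (Real.exp_pos _).ne' hnz.symm
    have hpt : -Real.log ‖z‖ / α = p 0 := by
      rw [hnz, Real.log_exp]
      field_simp
    have hd : HasDerivAt ψ (deriv ψ (p 0)) (-Real.log ‖z‖ / α) := by
      rw [hpt]; exact hdiff.hasDerivAt
    have hgrad := (grad_radial hα hzne hd).gradient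
    set d : ℝ := deriv ψ (p 0) with hdd
    set c : ℝ := Real.sqrt (α / (2 * π)) with hcc
    have hc2 : c^2 = α / (2*π) := Real.sq_sqrt (by positivity)
    have hE : (0:ℝ) < Real.exp (-α * p 0) := Real.exp_pos _
    have hdet : |(pd α p).det| = α * Real.exp (-α * p 0)^2 := by
      rw [det_pd, abs_neg, abs_of_pos (by positivity)]
    have hGval : G z = ((c * d / (α * ‖z‖^2))^2 * ‖z‖^2) * f z := by
      rw [hG]
      simp only
      rw [show (fun z : Plane =>
        Real.sqrt (α / (2 * Real.pi)) * ψ (-Real.log ‖z‖ / α)) = (fun z : Plane =>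
        c * ψ (-Real.log ‖z‖ / α)) from rfl]
      rw [show gradient (fun z : Plane => c * ψ (-Real.log ‖z‖ / α)) z
        = (-(c * d) / (α * ‖z‖ ^ 2)) • z from hgrad]
      rw [norm_smul, mul_pow, Real.norm_eq_abs, sq_abs]
      ring_nf
    rw [smul_eq_mul, hGval, hdet, hnz]
    have hEne : Real.exp (-α * p 0) ≠ 0 := ne_of_gt hE
    have hpibig : (0:ℝ) < 2*π := by positivity
    rw [div_pow, mul_pow c d, hc2]
    field_simp
  rw [hG] at ha
  rw [ha, hb, hc]

end MainAux

/-- **Energy concentration at the origin:** the measures `|∇g_n|² dx` of an elementary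
concentration converge to `‖ψ'‖²_{L²} δ₀` in the sense of distributions. -/
theorem statement18 (a : ℕ → ℝ) (ha : IsScale a) (ψ : ℝ → ℝ) (hψ : IsProfile ψ)
    (f : Plane → ℝ) (hf : ContDiff ℝ (⊤ : ℕ∞) f) (hsupp : HasCompactSupport f) :
    Filter.Tendsto (fun n => ∫ x : Plane,
        ‖gradient (fun z : Plane =>
          Real.sqrt (a n / (2 * Real.pi)) * ψ (-Real.log ‖z‖ / a n)) x‖ ^ 2 * f x)
      Filter.atTop (nhds ((∫ t, (deriv ψ t) ^ 2) * f 0)) := by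
  obtain ⟨C, hC⟩ := hf.continuous.bounded_above_of_compact_support hsupp
  -- the common integrand family
  set W : ℕ → Plane → ℝ := fun n p => (deriv ψ (p 0))^2 * f (pmap (a n) p) / (2*π) with hW
  set Wlim : Plane → ℝ := fun p => (deriv ψ (p 0))^2 * f 0 / (2*π) with hWlim
  have meas_p0 : Measurable (fun p : Plane => p 0) := continuous_p0.measurable
  -- Step 2 : dominated convergence
  have hdct : Tendsto (fun n => ∫ p in Spolar, W n p) atTop (nhds (∫ p in Spolar, Wlim p)) := by
    apply tendsto_integral_of_dominated_convergence
      (fun p => (deriv ψ (p 0))^2 * C / (2*π))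
    · intro n
      apply Measurable.aestronglyMeasurable
      exact ((((measurable_deriv ψ).comp meas_p0).pow_const 2).mul
        ((hf.continuous.comp (continuous_pmap (a n))).measurable)).div_const _
    · -- integrable bound
      have hind : Integrable (fun p : Plane =>
          ((deriv ψ (p 0))^2 * C / (2*π)) * (Set.Ioo (-π) π).indicator (fun _ => (1:ℝ)) (p 1))
          volume := by
        apply plane_integrable_prod (h := fun t => (deriv ψ t)^2 * C / (2*π))
          (g := (Set.Ioo (-π) π).indicator (fun _ => (1:ℝ)))
        · exact (hψ.2.1.integrable_sq.mul_const C).div_const _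
        · rw [integrable_indicator_iff measurableSet_Ioo]
          apply (integrableOn_const_iff).mpr
          right; rw [Real.volume_Ioo]; exact ENNReal.ofReal_lt_top
      refine (integrable_indicator_iff measurableSet_Spolar).mp (hind.congr ?_)
      filter_upwards with p
      by_cases hp : p ∈ Spolar
      · have hp' : p 1 ∈ Set.Ioo (-π) π := hp
        rw [Set.indicator_of_mem hp, Set.indicator_of_mem hp']
        ring
      · have hp' : p 1 ∉ Set.Ioo (-π) π := hp
        rw [Set.indicator_of_notMem hp, Set.indicator_of_notMem hp']
        ring
    · intro n
      filter_upwards with p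
      rw [hW]
      simp only
      rw [Real.norm_eq_abs, abs_div, abs_of_pos (show (0:ℝ) < 2*π by positivity), abs_mul,
        abs_pow, sq_abs]
      have hb2 : |f (pmap (a n) p)| ≤ C := by
        rw [← Real.norm_eq_abs]; exact hC _
      have h2pi : (0:ℝ) < 2*π := by positivity
      exact (div_le_div_iff_of_pos_right h2pi).mpr
        (mul_le_mul_of_nonneg_left hb2 (sq_nonneg (deriv ψ (p 0))))
    · -- a.e. convergence
      apply ae_restrict_of_ae
      have hp0ne : ∀ᵐ p : Plane, p 0 ≠ 0 := by
        rw [ae_iff]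
        have := plane_null (N := {0}) (measurableSet_singleton 0) (measure_singleton 0)
        convert this using 2
        ext p; simp
      filter_upwards [hp0ne] with p hp0
      rcases lt_or_gt_of_ne hp0 with hneg | hpos
      · -- p 0 < 0 : both sides vanish
        have hz : deriv ψ (p 0) = 0 := deriv_zero_of_neg hψ.1 hneg
        have : ∀ n, W n p = Wlim p := by
          intro n; rw [hW, hWlim]; simp only [hz]; ring
        rw [show (fun n => W n p) = fun _ => Wlim p from funext this]
        exact tendsto_const_nhds
      · -- p 0 > 0 : pmap (a n) p → 0
        have hto0 : Tendsto (fun n => pmap (a n) p) atTop (nhds (0:Plane)) := by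
          rw [tendsto_zero_iff_norm_tendsto_zero]
          simp only [norm_pmap]
          have h1 : Tendsto (fun n => a n * p 0) atTop atTop :=
            ha.2.atTop_mul_const hpos
          have h2 : Tendsto (fun n => -(a n * p 0)) atTop atBot :=
            tendsto_neg_atTop_atBot.comp h1
          have h3 := Real.tendsto_exp_atBot.comp h2
          exact h3.congr fun n => by simp [Function.comp, neg_mul]
        have hfc : Tendsto (fun n => f (pmap (a n) p)) atTop (nhds (f 0)) :=
          (hf.continuous.continuousAt.tendsto).comp hto0
        have := (hfc.const_mul ((deriv ψ (p 0))^2)).div_const (2*π)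
        exact this
  -- Step 1 : rewrite each term
  have hstep1 : ∀ n, ∫ x : Plane,
      ‖gradient (fun z : Plane =>
        Real.sqrt (a n / (2 * Real.pi)) * ψ (-Real.log ‖z‖ / a n)) x‖ ^ 2 * f x
      = ∫ p in Spolar, W n p := fun n => step1 (ha.1 n) hψ f
  -- Step 3 : value of the limit integral
  have hstep3 : ∫ p in Spolar, Wlim p = (∫ t, (deriv ψ t) ^ 2) * f 0 := by
    have h1 : ∫ p in Spolar, Wlim p = ∫ p : Plane, Spolar.indicator Wlim p :=
      (integral_indicator measurableSet_Spolar).symm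
    have h2 : Spolar.indicator Wlim = fun p : Plane =>
        ((deriv ψ (p 0))^2 * f 0 / (2*π)) * (Set.Ioo (-π) π).indicator (fun _ => (1:ℝ)) (p 1) := by
      funext p
      by_cases hp : p ∈ Spolar
      · have hp' : p 1 ∈ Set.Ioo (-π) π := hp
        rw [Set.indicator_of_mem hp, Set.indicator_of_mem hp', hWlim]
        ring
      · have hp' : p 1 ∉ Set.Ioo (-π) π := hp
        rw [Set.indicator_of_notMem hp, Set.indicator_of_notMem hp']
        ring
    have h5 := plane_integral_prod (fun t => (deriv ψ t)^2 * f 0 / (2*π))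
      ((Set.Ioo (-π) π).indicator (fun _ => (1:ℝ)))
    rw [h1, h2]
    rw [h5]
    have h3 : ∫ t : ℝ, (Set.Ioo (-π) π).indicator (fun _ => (1:ℝ)) t = 2*π := by
      rw [integral_indicator_const (1:ℝ) measurableSet_Ioo, Real.volume_real_Ioo]
      rw [max_eq_left (by linarith [Real.pi_pos] : (0:ℝ) ≤ π - -π), smul_eq_mul]
      ring
    have h4 : ∫ t : ℝ, (deriv ψ t)^2 * f 0 / (2*π)
        = (∫ t, (deriv ψ t) ^ 2) * f 0 / (2*π) := by
      rw [integral_div, integral_mul_const]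
    rw [h3, h4]
    have : π ≠ 0 := Real.pi_ne_zero
    field_simp
  rw [← hstep3]
  exact hdct.congr (fun n => (hstep1 n).symm)
end
end
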